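/- Let α ∈ (0,1) ∪ (1,2) and ρ ∈ (0,1) satisfy αρ < 1 and α(1−ρ) < 1, and set ρ̂ = 1−ρ. Then for every x > 1: (sin(παρ̂)/π)·∫_{−1}^{1} (x−y)^{α−1}(1−y)^{−αρ}(1+y)^{−αρ̂} dy = 1 − (Γ(1−αρ)·2^{1−α}/(Γ(αρ̂)·Γ(1−α)))·∫_{1}^{x} (t−1)^{αρ̂−1}(t+1)^{αρ−1} dt. -/

import Mathlib

set_option maxHeartbeats 1000000

open MeasureTheory Set Real

lemma beta_integrableOn {p q : ℝ} (hp : 0 < p) (hq : 0 < q) :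
    IntegrableOn (fun v : ℝ => v ^ (p - 1) * (1 - v) ^ (q - 1)) (Set.Ioo 0 1) := by
  have h := (Complex.betaIntegral_convergent (u := (p:ℂ)) (v := (q:ℂ)) (by simpa) (by simpa))
  rw [intervalIntegrable_iff] at h
  have h2 : IntegrableOn (fun v : ℝ =>
      ((v:ℂ) ^ ((p:ℂ) - 1) * (1 - (v:ℂ)) ^ ((q:ℂ) - 1)).re) (Set.Ioo 0 1) := by
    exact ((h.mono_set (by rw [Set.uIoc_of_le (zero_le_one)]; exact Ioo_subset_Ioc_self)).re)
  refine h2.congr_fun (fun v hv => ?_) measurableSet_Ioo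
  have h1 : (0:ℝ) ≤ v := le_of_lt hv.1
  have h2' : (0:ℝ) ≤ 1 - v := by linarith [hv.2]
  have he : ((v:ℂ) ^ ((p:ℂ)-1) * (1-(v:ℂ)) ^ ((q:ℂ)-1))
      = ((v ^ (p-1) * (1-v)^(q-1) : ℝ) : ℂ) := by
    rw [Complex.ofReal_mul, Complex.ofReal_cpow h1, Complex.ofReal_cpow h2']
    push_cast; ring
  beta_reduce; rw [he, Complex.ofReal_re]

lemma beta_value {p q : ℝ} (hp : 0 < p) (hq : 0 < q) :
    ∫ v in Set.Ioo (0:ℝ) 1, v ^ (p - 1) * (1 - v) ^ (q - 1)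
      = Real.Gamma p * Real.Gamma q / Real.Gamma (p + q) := by
  have key := Complex.Gamma_mul_Gamma_eq_betaIntegral (s := (p:ℂ)) (t := (q:ℂ))
    (by simpa) (by simpa)
  have hBeta : Complex.betaIntegral p q
      = ((∫ v in Set.Ioo (0:ℝ) 1, v ^ (p - 1) * (1 - v) ^ (q - 1) : ℝ) : ℂ) := by
    rw [show (∫ v in Set.Ioo (0:ℝ) 1, v ^ (p - 1) * (1 - v) ^ (q - 1))
        = ∫ v in (0:ℝ)..1, v ^ (p - 1) * (1 - v) ^ (q - 1) by
      rw [intervalIntegral.integral_of_le zero_le_one, integral_Ioc_eq_integral_Ioo]]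
    rw [Complex.betaIntegral, ← intervalIntegral.integral_ofReal]
    refine intervalIntegral.integral_congr fun v hv => ?_
    rw [Set.uIcc_of_le zero_le_one] at hv
    rw [Complex.ofReal_mul, Complex.ofReal_cpow hv.1,
      Complex.ofReal_cpow (by linarith [hv.2] : (0:ℝ) ≤ 1 - v)]
    push_cast
    ring
  rw [hBeta, ← Complex.ofReal_add, Complex.Gamma_ofReal, Complex.Gamma_ofReal,
    Complex.Gamma_ofReal, ← Complex.ofReal_mul, ← Complex.ofReal_mul] at key
  have hreal : Real.Gamma p * Real.Gamma q
      = Real.Gamma (p + q) * ∫ v in Set.Ioo (0:ℝ) 1, v ^ (p - 1) * (1 - v) ^ (q - 1) :=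
    mod_cast key
  rw [hreal, mul_div_cancel_left₀]
  exact (Real.Gamma_pos_of_pos (by linarith)).ne'


lemma meas_aux (c d e : ℝ) : Measurable (fun p : ℝ × ℝ =>
    (p.1 - p.2) ^ c * (1 - p.2) ^ d * (1 + p.2) ^ e) := by
  measurability

lemma key_inner (a b t : ℝ) (ha : 0 < a) (ha1 : a < 1) (hb : 0 < b) (hb1 : b < 1)
    (ht : 1 < t) :
    (IntegrableOn (fun y : ℝ => (t - y) ^ (a + b - 2) * (1 - y) ^ (-a) * (1 + y) ^ (-b))
      (Set.Ioo (-1:ℝ) 1)) ∧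
    ∫ y in Set.Ioo (-1:ℝ) 1, (t - y) ^ (a + b - 2) * (1 - y) ^ (-a) * (1 + y) ^ (-b)
      = 2 ^ (1 - (a + b)) * (Real.Gamma (1 - b) * Real.Gamma (1 - a) / Real.Gamma (2 - (a + b)))
        * ((t - 1) ^ (b - 1) * (t + 1) ^ (a - 1)) := by
  have hu : (0:ℝ) < t - 1 := by linarith
  have hs : (0:ℝ) < t + 1 := by linarith
  set φ : ℝ → ℝ := fun y => (t - 1) * (1 + y) / (2 * (t - y)) with hφdef
  set φ' : ℝ → ℝ := fun y => (t - 1) * (t + 1) / (2 * (t - y) ^ 2) with hφ'def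
  set g : ℝ → ℝ := fun v => v ^ ((1 - b) - 1) * (1 - v) ^ ((1 - a) - 1) with hgdef
  set f : ℝ → ℝ := fun y => (t - y) ^ (a + b - 2) * (1 - y) ^ (-a) * (1 + y) ^ (-b) with hfdef
  -- derivative
  have hd : ∀ y ∈ Set.Ioo (-1:ℝ) 1, HasDerivWithinAt φ (φ' y) (Set.Ioo (-1:ℝ) 1) y := by
    intro y hy
    have hA : (0:ℝ) < t - y := by linarith [hy.2]
    have h1 : HasDerivAt (fun y : ℝ => (t - 1) * (1 + y) / (2 * (t - y))) (φ' y) y := by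
      have hnum : HasDerivAt (fun y : ℝ => (t - 1) * (1 + y)) (t - 1) y := by
        simpa using (((hasDerivAt_id y).const_add 1).const_mul (t - 1))
      have hden : HasDerivAt (fun y : ℝ => 2 * (t - y)) (-2) y := by
        simpa using (((hasDerivAt_id y).const_sub t).const_mul 2)
      have := hnum.div hden (by positivity)
      refine this.congr_deriv ?_
      rw [hφ'def]
      field_simp
      ring
    exact h1.hasDerivWithinAt
  -- injectivity
  have hinj : Set.InjOn φ (Set.Ioo (-1:ℝ) 1) := by
    intro y1 hy1 y2 hy2 h
    have hA1 : (0:ℝ) < t - y1 := by linarith [hy1.2]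
    have hA2 : (0:ℝ) < t - y2 := by linarith [hy2.2]
    simp only [hφdef] at h
    rw [div_eq_div_iff (by positivity) (by positivity)] at h
    rcases lt_trichotomy y1 y2 with hlt | heq | hgt
    · exfalso; nlinarith [mul_pos (mul_pos hu hs) (sub_pos.2 hlt)]
    · exact heq
    · exfalso; nlinarith [mul_pos (mul_pos hu hs) (sub_pos.2 hgt)]
  -- image
  have himg : φ '' Set.Ioo (-1:ℝ) 1 = Set.Ioo (0:ℝ) 1 := by
    apply Set.eq_of_subset_of_subset
    · rintro v ⟨y, hy, rfl⟩
      have hA : (0:ℝ) < t - y := by linarith [hy.2]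
      constructor
      · have : (0:ℝ) < 1 + y := by linarith [hy.1]
        positivity
      · rw [div_lt_one (by positivity)]
        nlinarith [hy.2]
    · intro v hv
      have hden : (0:ℝ) < 2 * v + t - 1 := by nlinarith [hv.1]
      refine ⟨(2 * v * t - t + 1) / (2 * v + t - 1), ⟨?_, ?_⟩, ?_⟩
      · rw [lt_div_iff₀ hden]; nlinarith [hv.1]
      · rw [div_lt_one hden]; nlinarith [hv.2]
      · have hty : (0:ℝ) < t - (2 * v * t - t + 1) / (2 * v + t - 1) := by
          rw [sub_pos, div_lt_iff₀ hden]
          nlinarith [hv.2]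
        simp only [hφdef]
        rw [div_eq_iff (mul_pos two_pos hty).ne']
        field_simp
        ring
  -- pointwise identity
  have hpt : ∀ y ∈ Set.Ioo (-1:ℝ) 1,
      |φ' y| • g (φ y)
        = (2 ^ (a + b - 1) * (t - 1) ^ (1 - b) * (t + 1) ^ (1 - a)) * f y := by
    intro y hy
    have hA : (0:ℝ) < t - y := by linarith [hy.2]
    have hB : (0:ℝ) < 1 - y := by linarith [hy.2]
    have hC : (0:ℝ) < 1 + y := by linarith [hy.1]
    have hφpos : 0 < φ y := by
      simp only [hφdef]; positivity
    have h1φ : 1 - φ y = (t + 1) * (1 - y) / (2 * (t - y)) := by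
      simp only [hφdef]; field_simp; ring
    have h1φpos : 0 < 1 - φ y := by rw [h1φ]; positivity
    have habs : |φ' y| = (t - 1) * (t + 1) / (2 * (t - y) ^ 2) := by
      rw [abs_of_pos]; simp only [hφ'def]; positivity
    have e1 : φ y ^ ((1 - b) - 1) = ((t-1)^b * (1+y)^b / (2^b * (t-y)^b))⁻¹ := by
      rw [show (1 - b) - 1 = -b by ring, Real.rpow_neg hφpos.le]
      simp only [hφdef]
      rw [Real.div_rpow (by positivity) (by positivity),
        Real.mul_rpow hu.le hC.le, Real.mul_rpow (by norm_num) hA.le]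
    have e2 : (1 - φ y) ^ ((1 - a) - 1) = ((t+1)^a * (1-y)^a / (2^a * (t-y)^a))⁻¹ := by
      rw [show (1 - a) - 1 = -a by ring, Real.rpow_neg h1φpos.le, h1φ]
      rw [Real.div_rpow (by positivity) (by positivity),
        Real.mul_rpow hs.le hB.le, Real.mul_rpow (by norm_num) hA.le]
    have e3 : (2:ℝ) ^ (a + b - 1) = 2 ^ a * 2 ^ b * 2⁻¹ := by
      rw [show a + b - 1 = a + b + (-1) by ring, Real.rpow_add two_pos,
        Real.rpow_add two_pos, Real.rpow_neg_one]
    have e4 : (t - 1) ^ (1 - b) = (t - 1) * ((t-1)^b)⁻¹ := by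
      rw [show 1 - b = 1 + (-b) by ring, Real.rpow_add hu, Real.rpow_one,
        Real.rpow_neg hu.le]
    have e5 : (t + 1) ^ (1 - a) = (t + 1) * ((t+1)^a)⁻¹ := by
      rw [show 1 - a = 1 + (-a) by ring, Real.rpow_add hs, Real.rpow_one,
        Real.rpow_neg hs.le]
    have e6 : (t - y) ^ (a + b - 2) = (t-y)^a * (t-y)^b * ((t-y)^(2:ℕ))⁻¹ := by
      rw [show a + b - 2 = a + b + (-(2:ℕ)) by push_cast; ring, Real.rpow_add hA,
        Real.rpow_add hA, Real.rpow_neg hA.le, Real.rpow_natCast]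
    have e7 : (1 - y) ^ (-a) = ((1-y)^a)⁻¹ := Real.rpow_neg hB.le a
    have e8 : (1 + y) ^ (-b) = ((1+y)^b)⁻¹ := Real.rpow_neg hC.le b
    simp only [hgdef, hfdef, smul_eq_mul]
    rw [habs, e1, e2, e3, e4, e5, e6, e7, e8]
    have p1 : (0:ℝ) < (t-1)^b := Real.rpow_pos_of_pos hu b
    have p2 : (0:ℝ) < (t+1)^a := Real.rpow_pos_of_pos hs a
    have p3 : (0:ℝ) < (t-y)^a := Real.rpow_pos_of_pos hA a
    have p4 : (0:ℝ) < (t-y)^b := Real.rpow_pos_of_pos hA b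
    have p5 : (0:ℝ) < (1-y)^a := Real.rpow_pos_of_pos hB a
    have p6 : (0:ℝ) < (1+y)^b := Real.rpow_pos_of_pos hC b
    have p7 : (0:ℝ) < (2:ℝ)^a := Real.rpow_pos_of_pos two_pos a
    have p8 : (0:ℝ) < (2:ℝ)^b := Real.rpow_pos_of_pos two_pos b
    field_simp
  -- constant
  set K : ℝ := 2 ^ (a + b - 1) * (t - 1) ^ (1 - b) * (t + 1) ^ (1 - a) with hK
  have hKpos : 0 < K := by
    simp only [hK]; positivity
  -- integrability
  have hint : IntegrableOn g (Set.Ioo (0:ℝ) 1) := by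
    have := beta_integrableOn (p := 1 - b) (q := 1 - a) (by linarith) (by linarith)
    exact this
  have hi2 : IntegrableOn (fun y => |φ' y| • g (φ y)) (Set.Ioo (-1:ℝ) 1) := by
    rw [← integrableOn_image_iff_integrableOn_abs_deriv_smul measurableSet_Ioo hd hinj g]
    rw [himg]; exact hint
  have hi3 : IntegrableOn (fun y => K * f y) (Set.Ioo (-1:ℝ) 1) :=
    hi2.congr_fun hpt measurableSet_Ioo
  have hfint : IntegrableOn f (Set.Ioo (-1:ℝ) 1) := by
    have h4 : IntegrableOn (fun x => K⁻¹ * (K * f x)) (Set.Ioo (-1:ℝ) 1) :=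
      hi3.const_mul K⁻¹
    refine h4.congr_fun (fun y _ => ?_) measurableSet_Ioo
    field_simp
  constructor
  · exact hfint
  -- value
  have hval : ∫ v in Set.Ioo (0:ℝ) 1, g v = ∫ y in Set.Ioo (-1:ℝ) 1, |φ' y| • g (φ y) := by
    rw [← himg]
    exact integral_image_eq_integral_abs_deriv_smul measurableSet_Ioo hd hinj g
  rw [setIntegral_congr_fun measurableSet_Ioo hpt] at hval
  rw [integral_const_mul] at hval
  have hbv : ∫ v in Set.Ioo (0:ℝ) 1, g v
      = Real.Gamma (1 - b) * Real.Gamma (1 - a) / Real.Gamma (2 - (a + b)) := by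
    rw [hgdef]
    rw [beta_value (by linarith) (by linarith), show (1-b)+(1-a) = 2-(a+b) by ring]
  have hKinv : K⁻¹ = 2 ^ (1 - (a + b)) * ((t - 1) ^ (b - 1) * (t + 1) ^ (a - 1)) := by
    simp only [hK]
    rw [mul_inv, mul_inv, ← Real.rpow_neg (by norm_num : (0:ℝ) ≤ 2),
      ← Real.rpow_neg hu.le, ← Real.rpow_neg hs.le]
    rw [show -(a + b - 1) = 1 - (a+b) by ring, show -(1-b) = b - 1 by ring,
      show -(1-a) = a - 1 by ring]
    ring
  have : ∫ y in Set.Ioo (-1:ℝ) 1, f y = K⁻¹ * ∫ v in Set.Ioo (0:ℝ) 1, g v := by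
    rw [hval]; field_simp
  rw [hfdef] at this
  rw [this, hbv, hKinv]
  ring


lemma half_beta {b : ℝ} (hb : 0 < b) (hb1 : b < 1) :
    (IntegrableOn (fun y : ℝ => (1 - y) ^ (b - 1) * (1 + y) ^ (-b)) (Set.Ioo (-1:ℝ) 1)) ∧
    ∫ y in Set.Ioo (-1:ℝ) 1, (1 - y) ^ (b - 1) * (1 + y) ^ (-b)
      = Real.Gamma (1 - b) * Real.Gamma b := by
  set ψ : ℝ → ℝ := fun u => 2 * u - 1 with hψdef
  set g : ℝ → ℝ := fun y => (1 - y) ^ (b - 1) * (1 + y) ^ (-b) with hgdef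
  have hd : ∀ u ∈ Set.Ioo (0:ℝ) 1, HasDerivWithinAt ψ 2 (Set.Ioo (0:ℝ) 1) u := by
    intro u hu
    have : HasDerivAt ψ 2 u := by
      simpa [hψdef] using (((hasDerivAt_id u).const_mul 2).sub_const 1)
    exact this.hasDerivWithinAt
  have hinj : Set.InjOn ψ (Set.Ioo (0:ℝ) 1) := by
    intro u1 _ u2 _ h
    simp only [hψdef] at h
    linarith
  have himg : ψ '' Set.Ioo (0:ℝ) 1 = Set.Ioo (-1:ℝ) 1 := by
    ext z
    constructor
    · rintro ⟨u, hu, rfl⟩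
      exact ⟨by simp only [hψdef]; linarith [hu.1], by simp only [hψdef]; linarith [hu.2]⟩
    · intro hz
      exact ⟨(z + 1) / 2, ⟨by linarith [hz.1], by linarith [hz.2]⟩, by simp only [hψdef]; ring⟩
  have hpt : ∀ u ∈ Set.Ioo (0:ℝ) 1,
      |(2:ℝ)| • g (ψ u) = u ^ ((1 - b) - 1) * (1 - u) ^ (b - 1) := by
    intro u hu
    have hu0 : (0:ℝ) < u := hu.1
    have hu1 : (0:ℝ) < 1 - u := by linarith [hu.2]
    have e1 : 1 - ψ u = 2 * (1 - u) := by simp only [hψdef]; ring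
    have e2 : 1 + ψ u = 2 * u := by simp only [hψdef]; ring
    have h2 : (2:ℝ) ^ (b - 1) * (2:ℝ) ^ (-b) = 2⁻¹ := by
      rw [← Real.rpow_add two_pos, show b - 1 + -b = -1 by ring, Real.rpow_neg_one]
    simp only [hgdef, smul_eq_mul, e1, e2]
    rw [Real.mul_rpow (by norm_num) hu1.le, Real.mul_rpow (by norm_num) hu0.le,
      show (1 - b) - 1 = -b by ring, abs_of_pos (by norm_num : (0:ℝ) < 2)]
    linear_combination (2 * (1 - u) ^ (b - 1) * u ^ (-b)) * h2
  have hint : IntegrableOn (fun v : ℝ => v ^ ((1 - b) - 1) * (1 - v) ^ (b - 1)) (Set.Ioo 0 1) :=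
    beta_integrableOn (by linarith) hb
  have hi2 : IntegrableOn (fun u => |(2:ℝ)| • g (ψ u)) (Set.Ioo (0:ℝ) 1) :=
    hint.congr_fun (fun u hu => (hpt u hu).symm) measurableSet_Ioo
  have hgint : IntegrableOn g (Set.Ioo (-1:ℝ) 1) := by
    rw [← himg, integrableOn_image_iff_integrableOn_abs_deriv_smul measurableSet_Ioo hd hinj g]
    exact hi2
  refine ⟨hgint, ?_⟩
  have hval : ∫ y in Set.Ioo (-1:ℝ) 1, g y = ∫ u in Set.Ioo (0:ℝ) 1, |(2:ℝ)| • g (ψ u) := by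
    rw [← himg]
    exact integral_image_eq_integral_abs_deriv_smul measurableSet_Ioo hd hinj g
  rw [show (∫ y in Set.Ioo (-1:ℝ) 1, (1 - y) ^ (b - 1) * (1 + y) ^ (-b))
      = ∫ y in Set.Ioo (-1:ℝ) 1, g y from rfl, hval,
    setIntegral_congr_fun measurableSet_Ioo hpt, beta_value (by linarith) hb,
    show (1 - b) + b = 1 by ring, Real.Gamma_one, div_one]

/-- For `x > 1`:
`c_{α,ρ̂} ∫_{-1}^{1} (x-y)^{α-1} (1-y)^{-αρ} (1+y)^{-αρ̂} dy
  = 1 - (Γ(1-αρ)·2^{1-α}/(Γ(αρ̂)Γ(1-α))) ∫_1^x (t-1)^{αρ̂-1}(t+1)^{αρ-1} dt`. -/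
theorem potential_of_phi (α ρ : ℝ)
    (hα : α ∈ Set.Ioo (0:ℝ) 1 ∪ Set.Ioo (1:ℝ) 2) (hρ : ρ ∈ Set.Ioo (0:ℝ) 1)
    (hαρ : α * ρ < 1) (hαρ' : α * (1 - ρ) < 1)
    (x : ℝ) (hx : 1 < x) :
    (Real.sin (π * α * (1 - ρ)) / π) *
        (∫ y in Set.Ioo (-1:ℝ) 1,
          (x - y) ^ (α - 1) * (1 - y) ^ (-(α * ρ)) * (1 + y) ^ (-(α * (1 - ρ))))
      = 1 - (Real.Gamma (1 - α * ρ) * (2:ℝ) ^ (1 - α)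
            / (Real.Gamma (α * (1 - ρ)) * Real.Gamma (1 - α))) *
          (∫ t in Set.Ioo (1:ℝ) x,
            (t - 1) ^ (α * (1 - ρ) - 1) * (t + 1) ^ (α * ρ - 1)) := by
  obtain ⟨hα0, hα2, hαne1⟩ : 0 < α ∧ α < 2 ∧ α ≠ 1 := by
    rcases hα with h | h
    · exact ⟨h.1, by linarith [h.2], ne_of_lt h.2⟩
    · exact ⟨by linarith [h.1], h.2, ne_of_gt h.1⟩
  rw [show π * α * (1 - ρ) = π * (α * (1 - ρ)) by ring]
  set a := α * ρ with ha_def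
  set b := α * (1 - ρ) with hb_def
  have ha : 0 < a := by rw [ha_def]; exact mul_pos hα0 hρ.1
  have hb : 0 < b := by rw [hb_def]; exact mul_pos hα0 (by linarith [hρ.2])
  have ha1 : a < 1 := hαρ
  have hb1 : b < 1 := hαρ'
  have hab : a + b = α := by rw [ha_def, hb_def]; ring
  clear_value a b
  -- FTC
  have hFTC : ∀ y ∈ Set.Ioo (-1:ℝ) 1,
      (α - 1) * (∫ t in Set.Ioo (1:ℝ) x, (t - y) ^ (α - 2))
        = (x - y) ^ (α - 1) - (1 - y) ^ (α - 1) := by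
    intro y hy
    have hder : ∀ t ∈ Set.uIcc (1:ℝ) x, HasDerivAt (fun s => (s - y) ^ (α - 1))
        ((α - 1) * (t - y) ^ (α - 2)) t := by
      intro t ht
      rw [Set.uIcc_of_le hx.le] at ht
      have hA : (0:ℝ) < t - y := by linarith [ht.1, hy.2]
      have := (((hasDerivAt_id t).sub_const y).rpow_const
        (p := α - 1) (Or.inl hA.ne'))
      simpa [show α - 1 - 1 = α - 2 by ring] using this
    have hcont : IntervalIntegrable (fun t => (α - 1) * (t - y) ^ (α - 2)) volume 1 x := by
      apply ContinuousOn.intervalIntegrable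
      apply ContinuousOn.mul continuousOn_const
      apply ContinuousOn.rpow_const
      · exact (continuous_id.sub continuous_const).continuousOn
      · intro t ht
        rw [Set.uIcc_of_le hx.le] at ht
        exact Or.inl (by linarith [ht.1, hy.2] : t - y ≠ 0)
    have h := intervalIntegral.integral_eq_sub_of_hasDerivAt hder hcont
    rw [intervalIntegral.integral_of_le hx.le, integral_Ioc_eq_integral_Ioo,
      MeasureTheory.integral_const_mul] at h
    exact h
  -- key_inner specialized
  have hki : ∀ t, 1 < t →
      (IntegrableOn (fun y : ℝ => (t - y) ^ (α - 2) * (1 - y) ^ (-a) * (1 + y) ^ (-b))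
        (Set.Ioo (-1:ℝ) 1)) ∧
      ∫ y in Set.Ioo (-1:ℝ) 1, (t - y) ^ (α - 2) * (1 - y) ^ (-a) * (1 + y) ^ (-b)
        = 2 ^ (1 - α) * (Real.Gamma (1 - b) * Real.Gamma (1 - a) / Real.Gamma (2 - α))
          * ((t - 1) ^ (b - 1) * (t + 1) ^ (a - 1)) := by
    intro t ht
    have h := key_inner a b t ha ha1 hb hb1 ht
    rw [hab] at h
    exact h
  -- Fubini integrability
  have hmeas : AEStronglyMeasurable
      (Function.uncurry fun t y : ℝ => (t - y) ^ (α - 2) * (1 - y) ^ (-a) * (1 + y) ^ (-b))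
      ((volume.restrict (Set.Ioo (1:ℝ) x)).prod (volume.restrict (Set.Ioo (-1:ℝ) 1))) := by
    exact (meas_aux (α - 2) (-a) (-b)).aestronglyMeasurable
  have hqint : IntegrableOn (fun t : ℝ => (t + 1) ^ (a - 1) * (t - 1) ^ (b - 1))
      (Set.Ioo (1:ℝ) x) := by
    have hshift : IntervalIntegrable (fun t : ℝ => (t - 1) ^ (b - 1)) volume 1 x := by
      have h := (intervalIntegral.intervalIntegrable_rpow' (r := b - 1)
        (by linarith) (a := 0) (b := x - 1)).comp_sub_right 1
      simpa using h
    have hIoo : IntegrableOn (fun t : ℝ => (t - 1) ^ (b - 1)) (Set.Ioo 1 x) := by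
      rw [intervalIntegrable_iff, Set.uIoc_of_le hx.le] at hshift
      exact hshift.mono_set Set.Ioo_subset_Ioc_self
    refine IntegrableOn.continuousOn_mul_of_subset ?_ hIoo isCompact_Icc
      measurableSet_Ioo Set.Ioo_subset_Icc_self
    apply ContinuousOn.rpow_const
    · exact (continuous_id.add continuous_const).continuousOn
    · intro t ht
      have h1t : (1:ℝ) ≤ t := ht.1
      exact Or.inl (by intro hcon; linarith)
  have hFint : Integrable
      (Function.uncurry fun t y : ℝ => (t - y) ^ (α - 2) * (1 - y) ^ (-a) * (1 + y) ^ (-b))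
      ((volume.restrict (Set.Ioo (1:ℝ) x)).prod (volume.restrict (Set.Ioo (-1:ℝ) 1))) := by
    refine (integrable_prod_iff hmeas).2 ⟨?_, ?_⟩
    · refine (ae_restrict_iff' measurableSet_Ioo).2 (Filter.Eventually.of_forall fun t ht => ?_)
      exact (hki t ht.1).1
    · have hR0 : IntegrableOn (fun t : ℝ =>
          (2 ^ (1 - α) * (Real.Gamma (1 - b) * Real.Gamma (1 - a) / Real.Gamma (2 - α)))
            * ((t + 1) ^ (a - 1) * (t - 1) ^ (b - 1))) (Set.Ioo (1:ℝ) x) :=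
        hqint.const_mul _
      have hR : IntegrableOn (fun t : ℝ =>
          2 ^ (1 - α) * (Real.Gamma (1 - b) * Real.Gamma (1 - a) / Real.Gamma (2 - α))
            * ((t - 1) ^ (b - 1) * (t + 1) ^ (a - 1))) (Set.Ioo (1:ℝ) x) :=
        hR0.congr_fun (fun t _ => by ring) measurableSet_Ioo
      refine hR.congr ?_
      refine (ae_restrict_iff' measurableSet_Ioo).2 (Filter.Eventually.of_forall fun t ht => ?_)
      have hnorm : ∀ y ∈ Set.Ioo (-1:ℝ) 1,
          ‖(t - y) ^ (α - 2) * (1 - y) ^ (-a) * (1 + y) ^ (-b)‖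
            = (t - y) ^ (α - 2) * (1 - y) ^ (-a) * (1 + y) ^ (-b) := by
        intro y hy
        have h1 : (0:ℝ) ≤ t - y := by linarith [ht.1, hy.2]
        have h2 : (0:ℝ) ≤ 1 - y := by linarith [hy.2]
        have h3 : (0:ℝ) ≤ 1 + y := by linarith [hy.1]
        rw [Real.norm_eq_abs, abs_of_nonneg]
        exact mul_nonneg (mul_nonneg (Real.rpow_nonneg h1 _) (Real.rpow_nonneg h2 _))
          (Real.rpow_nonneg h3 _)
      calc (2:ℝ) ^ (1 - α) * (Real.Gamma (1 - b) * Real.Gamma (1 - a) / Real.Gamma (2 - α))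
            * ((t - 1) ^ (b - 1) * (t + 1) ^ (a - 1))
          = ∫ y in Set.Ioo (-1:ℝ) 1, (t - y) ^ (α - 2) * (1 - y) ^ (-a) * (1 + y) ^ (-b) :=
            ((hki t ht.1).2).symm
        _ = ∫ y in Set.Ioo (-1:ℝ) 1,
              ‖(t - y) ^ (α - 2) * (1 - y) ^ (-a) * (1 + y) ^ (-b)‖ :=
            (setIntegral_congr_fun measurableSet_Ioo
              (fun y hy => (hnorm y hy).symm))
  -- half beta
  obtain ⟨hint1, hval1⟩ := half_beta hb hb1
  -- pointwise split
  have hpt2 : ∀ y ∈ Set.Ioo (-1:ℝ) 1,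
      (x - y) ^ (α - 1) * (1 - y) ^ (-a) * (1 + y) ^ (-b)
        = (1 - y) ^ (b - 1) * (1 + y) ^ (-b)
          + (α - 1) * ∫ t in Set.Ioo (1:ℝ) x,
              (t - y) ^ (α - 2) * (1 - y) ^ (-a) * (1 + y) ^ (-b) := by
    intro y hy
    have hB : (0:ℝ) < 1 - y := by linarith [hy.2]
    have h1 := hFTC y hy
    have hpull : (∫ t in Set.Ioo (1:ℝ) x, (t - y) ^ (α - 2) * (1 - y) ^ (-a) * (1 + y) ^ (-b))
        = (∫ t in Set.Ioo (1:ℝ) x, (t - y) ^ (α - 2)) * ((1 - y) ^ (-a) * (1 + y) ^ (-b)) := by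
      simp only [mul_assoc]
      rw [MeasureTheory.integral_mul_const]
    have hpow : (1 - y) ^ (α - 1) * (1 - y) ^ (-a) = (1 - y) ^ (b - 1) := by
      rw [← Real.rpow_add hB, show α - 1 + -a = b - 1 by rw [ha_def, hb_def]; ring]
    have hxy : (x - y) ^ (α - 1)
        = (1 - y) ^ (α - 1) + (α - 1) * ∫ t in Set.Ioo (1:ℝ) x, (t - y) ^ (α - 2) := by
      linarith [h1]
    rw [hpull, hxy]
    linear_combination ((1 + y) ^ (-b)) * hpow
  -- assembling the integral
  have hg2int : Integrable (fun y : ℝ => (α - 1) * ∫ t in Set.Ioo (1:ℝ) x,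
      (t - y) ^ (α - 2) * (1 - y) ^ (-a) * (1 + y) ^ (-b))
      (volume.restrict (Set.Ioo (-1:ℝ) 1)) := by
    exact (hFint.integral_prod_right).const_mul (α - 1)
  have hI : (∫ y in Set.Ioo (-1:ℝ) 1, (x - y) ^ (α - 1) * (1 - y) ^ (-a) * (1 + y) ^ (-b))
      = Real.Gamma (1 - b) * Real.Gamma b
        + (α - 1) * (2 ^ (1 - α)
            * (Real.Gamma (1 - b) * Real.Gamma (1 - a) / Real.Gamma (2 - α))
            * ∫ t in Set.Ioo (1:ℝ) x, (t - 1) ^ (b - 1) * (t + 1) ^ (a - 1)) := by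
    rw [setIntegral_congr_fun measurableSet_Ioo hpt2]
    rw [MeasureTheory.integral_add hint1 hg2int]
    rw [hval1, MeasureTheory.integral_const_mul]
    have hswap : (∫ t in Set.Ioo (1:ℝ) x, ∫ y in Set.Ioo (-1:ℝ) 1,
          (t - y) ^ (α - 2) * (1 - y) ^ (-a) * (1 + y) ^ (-b))
        = ∫ y in Set.Ioo (-1:ℝ) 1, ∫ t in Set.Ioo (1:ℝ) x,
            (t - y) ^ (α - 2) * (1 - y) ^ (-a) * (1 + y) ^ (-b) :=
      integral_integral_swap hFint
    rw [← hswap]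
    rw [setIntegral_congr_fun measurableSet_Ioo (fun t ht => (hki t ht.1).2),
      MeasureTheory.integral_const_mul]
  rw [hI]
  -- final algebra
  have hπ : (0:ℝ) < π := Real.pi_pos
  have hΓb : 0 < Real.Gamma b := Real.Gamma_pos_of_pos hb
  have hsin : 0 < Real.sin (π * b) := by
    apply Real.sin_pos_of_pos_of_lt_pi (by positivity)
    nlinarith
  have hGG : Real.Gamma b * Real.Gamma (1 - b) = π / Real.sin (π * b) :=
    Real.Gamma_mul_Gamma_one_sub b
  rw [eq_div_iff hsin.ne'] at hGG
  have hG2 : Real.Gamma (2 - α) = (1 - α) * Real.Gamma (1 - α) := by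
    rw [show (2:ℝ) - α = (1 - α) + 1 by ring,
      Real.Gamma_add_one (sub_ne_zero.2 (Ne.symm hαne1))]
  have hΓ1α : Real.Gamma (1 - α) ≠ 0 := by
    apply Real.Gamma_ne_zero
    intro m
    rcases Nat.eq_zero_or_pos m with hm | hm
    · subst hm; push_cast; intro h; exact hαne1 (by linarith)
    · have h1 : (1:ℝ) ≤ m := by exact_mod_cast hm
      intro h
      linarith
  have h1α : (1:ℝ) - α ≠ 0 := sub_ne_zero.2 (Ne.symm hαne1)
  have hΓ1b : Real.Gamma (1 - b) = π / (Real.sin (π * b) * Real.Gamma b) := by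
    rw [eq_div_iff (mul_ne_zero hsin.ne' hΓb.ne')]
    linear_combination hGG
  rw [hG2, hΓ1b]
  field_simp
  ring
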